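/- arXiv:2012.11761 — 3 statements merged into one kernel-verified Lean document; each statement's English description precedes it below -/
import Mathlib

section
/- Let H be an arrangement of N hyperplanes in R^n. Then the number of (full-dimensional) regions of H (i.e., nonempty connected open sets obtained by intersecting, for each hyperplane, one of its two open half-spaces) is at most the sum over k=0..n of binomial(N, k). -/
/-!
Deletion–restriction. Remove the last hyperplane `H`. A region of the remaining arrangement either
lies on one side of `H`, and then yields one region, or is cut by `H` into two. A cut region is
convex, so by the intermediate value theorem it meets `H`, where it is a region of the arrangement
induced on `H ≅ ℝⁿ⁻¹`. Hence `r(n, N + 1) ≤ r(n, N) + r(n - 1, N)`, and Pascal's rule turns this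
recursion into the bound `∑_{k ≤ n} C(N, k)`.
-/

def openHalfspace {n : ℕ} (ℓ : (Fin n → ℝ) →ᵃ[ℝ] ℝ) (b : Bool) : Set (Fin n → ℝ) :=
  if b then {x | 0 < ℓ x} else {x | ℓ x < 0}

def arrRegion {n N : ℕ} (ℓ : Fin N → ((Fin n → ℝ) →ᵃ[ℝ] ℝ)) (s : Fin N → Bool) :
    Set (Fin n → ℝ) :=
  ⋂ i, openHalfspace (ℓ i) (s i)

open Set

def regionPatterns {n N : ℕ} (ℓ : Fin N → ((Fin n → ℝ) →ᵃ[ℝ] ℝ)) : Set (Fin N → Bool) :=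
  {s | (arrRegion ℓ s).Nonempty}

def splitPatterns {n N : ℕ} (ℓ : Fin (N + 1) → ((Fin n → ℝ) →ᵃ[ℝ] ℝ)) : Set (Fin N → Bool) :=
  {s | (arrRegion ℓ (Fin.snoc s true)).Nonempty ∧ (arrRegion ℓ (Fin.snoc s false)).Nonempty}

section Halfspace

variable {n : ℕ}

@[simp]
lemma openHalfspace_true (ℓ : (Fin n → ℝ) →ᵃ[ℝ] ℝ) : openHalfspace ℓ true = {x | 0 < ℓ x} := rfl

@[simp]
lemma openHalfspace_false (ℓ : (Fin n → ℝ) →ᵃ[ℝ] ℝ) : openHalfspace ℓ false = {x | ℓ x < 0} := rfl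

lemma openHalfspace_comp {m : ℕ} (ℓ : (Fin n → ℝ) →ᵃ[ℝ] ℝ) (e : (Fin m → ℝ) →ᵃ[ℝ] (Fin n → ℝ))
    (b : Bool) : openHalfspace (ℓ.comp e) b = e ⁻¹' openHalfspace ℓ b := by
  cases b <;> rfl

lemma convex_openHalfspace (ℓ : (Fin n → ℝ) →ᵃ[ℝ] ℝ) (b : Bool) :
    Convex ℝ (openHalfspace ℓ b) := by
  cases b
  · exact (convex_Iio 0).affine_preimage ℓ
  · exact (convex_Ioi 0).affine_preimage ℓ

lemma eq_of_mem_openHalfspace {ℓ : (Fin n → ℝ) →ᵃ[ℝ] ℝ} {b c : Bool} {x : Fin n → ℝ}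
    (hb : x ∈ openHalfspace ℓ b) (hc : x ∈ openHalfspace ℓ c) : b = c := by
  cases b <;> cases c <;>
    simp only [openHalfspace_true, openHalfspace_false, mem_ofPred_eq] at hb hc <;>
    first | rfl | linarith

end Halfspace

section Region

variable {n N : ℕ}

lemma convex_arrRegion (ℓ : Fin N → ((Fin n → ℝ) →ᵃ[ℝ] ℝ)) (s : Fin N → Bool) :
    Convex ℝ (arrRegion ℓ s) :=
  convex_iInter fun i => convex_openHalfspace (ℓ i) (s i)

lemma eq_of_mem_arrRegion {ℓ : Fin N → ((Fin n → ℝ) →ᵃ[ℝ] ℝ)} {s t : Fin N → Bool}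
    {x : Fin n → ℝ} (hs : x ∈ arrRegion ℓ s) (ht : x ∈ arrRegion ℓ t) : s = t :=
  funext fun i => eq_of_mem_openHalfspace (mem_iInter.1 hs i) (mem_iInter.1 ht i)

lemma arrRegion_comp {m : ℕ} (ℓ : Fin N → ((Fin n → ℝ) →ᵃ[ℝ] ℝ))
    (e : (Fin m → ℝ) →ᵃ[ℝ] (Fin n → ℝ)) (s : Fin N → Bool) :
    arrRegion (fun i => (ℓ i).comp e) s = e ⁻¹' arrRegion ℓ s := by
  simp only [arrRegion, openHalfspace_comp, preimage_iInter]

lemma arrRegion_snoc (ℓ : Fin (N + 1) → ((Fin n → ℝ) →ᵃ[ℝ] ℝ)) (s : Fin N → Bool) (b : Bool) :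
    arrRegion ℓ (Fin.snoc s b) =
      arrRegion (fun i => ℓ i.castSucc) s ∩ openHalfspace (ℓ (Fin.last N)) b := by
  ext x
  simp [arrRegion, Fin.forall_fin_succ']

end Region

lemma ncard_regionPatterns_le_one {N : ℕ} (ℓ : Fin N → ((Fin 0 → ℝ) →ᵃ[ℝ] ℝ)) :
    (regionPatterns ℓ).ncard ≤ 1 :=
  (ncard_le_one_iff (toFinite _)).2 fun ⟨x, hx⟩ ⟨y, hy⟩ =>
    eq_of_mem_arrRegion hx (Subsingleton.elim y x ▸ hy)

section DeletionRestriction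

variable {n N : ℕ}

lemma ncard_regionPatterns_le_add (ℓ : Fin (N + 1) → ((Fin n → ℝ) →ᵃ[ℝ] ℝ)) :
    (regionPatterns ℓ).ncard
      ≤ (regionPatterns fun i => ℓ i.castSucc).ncard + (splitPatterns ℓ).ncard := by
  set A := {s : Fin N → Bool | (arrRegion ℓ (Fin.snoc s true)).Nonempty}
  set B := {s : Fin N → Bool | (arrRegion ℓ (Fin.snoc s false)).Nonempty}
  let ins (b : Bool) (s : Fin N → Bool) : Fin (N + 1) → Bool := Fin.snoc s b
  have hcover : regionPatterns ℓ ⊆ ins true '' A ∪ ins false '' B := by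
    intro s hs
    rw [← Fin.snoc_init_self s] at hs ⊢
    generalize s (Fin.last N) = b at hs ⊢
    cases b
    · exact Or.inr ⟨_, hs, rfl⟩
    · exact Or.inl ⟨_, hs, rfl⟩
  have hrestrict : A ∪ B ⊆ regionPatterns fun i => ℓ i.castSucc := by
    rintro s (hs | hs) <;>
      exact hs.mono ((arrRegion_snoc ℓ s _).trans_subset inter_subset_left)
  calc (regionPatterns ℓ).ncard
      ≤ (ins true '' A ∪ ins false '' B).ncard := ncard_le_ncard hcover (toFinite _)
    _ ≤ (ins true '' A).ncard + (ins false '' B).ncard := ncard_union_le _ _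
    _ ≤ A.ncard + B.ncard := add_le_add (ncard_image_le (toFinite _)) (ncard_image_le (toFinite _))
    _ = (A ∪ B).ncard + (splitPatterns ℓ).ncard := (ncard_union_add_ncard_inter A B).symm
    _ ≤ (regionPatterns fun i => ℓ i.castSucc).ncard + (splitPatterns ℓ).ncard :=
        Nat.add_le_add_right (ncard_le_ncard hrestrict (toFinite _)) _

lemma exists_mem_arrRegion_of_mem_splitPatterns {ℓ : Fin (N + 1) → ((Fin n → ℝ) →ᵃ[ℝ] ℝ)}
    {s : Fin N → Bool} (hs : s ∈ splitPatterns ℓ) :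
    ∃ z ∈ arrRegion (fun i => ℓ i.castSucc) s, ℓ (Fin.last N) z = 0 := by
  obtain ⟨⟨x, hx⟩, ⟨y, hy⟩⟩ := hs
  rw [arrRegion_snoc] at hx hy
  have hseg : segment ℝ y x ⊆ arrRegion (fun i => ℓ i.castSucc) s :=
    (convex_arrRegion _ s).segment_subset hy.1 hx.1
  have hzero : (0 : ℝ) ∈ Icc (ℓ (Fin.last N) y) (ℓ (Fin.last N) x) :=
    ⟨le_of_lt hy.2, le_of_lt hx.2⟩
  obtain ⟨z, hz, hz0⟩ := (convex_segment y x).isPreconnected.intermediate_value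
    (left_mem_segment ℝ y x) (right_mem_segment ℝ y x)
    (ℓ (Fin.last N)).continuous_of_finiteDimensional.continuousOn hzero
  exact ⟨z, hseg hz, hz0⟩

lemma linear_ne_zero_of_splitPatterns_nonempty {ℓ : Fin (N + 1) → ((Fin n → ℝ) →ᵃ[ℝ] ℝ)}
    (h : (splitPatterns ℓ).Nonempty) : (ℓ (Fin.last N)).linear ≠ 0 := by
  obtain ⟨s, ⟨x, hx⟩, ⟨y, hy⟩⟩ := h
  rw [arrRegion_snoc] at hx hy
  intro hlin
  obtain ⟨q, hq⟩ := (AffineMap.linear_eq_zero_iff_exists_const _).1 hlin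
  have hpos : 0 < q := by simpa [hq] using hx.2
  have hneg : q < 0 := by simpa [hq] using hy.2
  linarith

lemma splitPatterns_subset_regionPatterns_comp {m : ℕ}
    {ℓ : Fin (N + 1) → ((Fin n → ℝ) →ᵃ[ℝ] ℝ)} {e : (Fin m → ℝ) →ᵃ[ℝ] (Fin n → ℝ)}
    (he : {z | ℓ (Fin.last N) z = 0} ⊆ range e) :
    splitPatterns ℓ ⊆ regionPatterns fun i => (ℓ i.castSucc).comp e := by
  intro s hs
  obtain ⟨z, hz, hz0⟩ := exists_mem_arrRegion_of_mem_splitPatterns hs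
  obtain ⟨w, rfl⟩ := he hz0
  exact ⟨w, by rwa [arrRegion_comp]⟩

end DeletionRestriction

lemma AffineMap.exists_zeroSet_subset_range {𝕜 E : Type*} [Field 𝕜] [AddCommGroup E]
    [Module 𝕜 E] [FiniteDimensional 𝕜 E] {n : ℕ} (hE : Module.finrank 𝕜 E = n + 1)
    (L : E →ᵃ[𝕜] 𝕜) (hL : L.linear ≠ 0) :
    ∃ e : (Fin n → 𝕜) →ᵃ[𝕜] E, {z | L z = 0} ⊆ range e := by
  have hker : Module.finrank 𝕜 (LinearMap.ker L.linear) = n := by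
    have := Module.Dual.finrank_ker_add_one_of_ne_zero hL
    omega
  obtain ⟨g⟩ : Nonempty ((Fin n → 𝕜) ≃ₗ[𝕜] LinearMap.ker L.linear) :=
    FiniteDimensional.nonempty_linearEquiv_of_finrank_eq (by rw [hker, Module.finrank_fin_fun])
  obtain ⟨u, hu⟩ := (L.linear_surjective_iff.1 (LinearMap.surjective hL)) 0
  refine ⟨((LinearMap.ker L.linear).subtype ∘ₗ g.toLinearMap).toAffineMap + AffineMap.const 𝕜 _ u,
    fun z hz => ?_⟩
  have hzu : z - u ∈ LinearMap.ker L.linear := by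
    rw [LinearMap.mem_ker, ← vsub_eq_sub, L.linearMap_vsub, hz, hu, vsub_self]
  exact ⟨g.symm ⟨z - u, hzu⟩, by simp⟩

lemma exists_ncard_splitPatterns_le {n N : ℕ} (ℓ : Fin (N + 1) → ((Fin (n + 1) → ℝ) →ᵃ[ℝ] ℝ)) :
    ∃ m : Fin N → ((Fin n → ℝ) →ᵃ[ℝ] ℝ), (splitPatterns ℓ).ncard ≤ (regionPatterns m).ncard := by
  rcases (splitPatterns ℓ).eq_empty_or_nonempty with h | h
  · exact ⟨fun _ => 0, by simp [h]⟩
  obtain ⟨e, he⟩ := AffineMap.exists_zeroSet_subset_range (Module.finrank_fin_fun ℝ) _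
    (linear_ne_zero_of_splitPatterns_nonempty h)
  exact ⟨_, ncard_le_ncard (splitPatterns_subset_regionPatterns_comp he) (toFinite _)⟩

lemma sum_range_choose_succ (N n : ℕ) :
    ∑ k ∈ Finset.range (n + 2), (N + 1).choose k
      = ∑ k ∈ Finset.range (n + 2), N.choose k + ∑ k ∈ Finset.range (n + 1), N.choose k := by
  rw [Finset.sum_range_succ' (fun k => (N + 1).choose k), Finset.sum_range_succ' (N.choose ·)]
  simp only [Nat.choose_succ_succ, Nat.choose_zero_right, Finset.sum_add_distrib,
    Nat.succ_eq_add_one]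
  omega

/-- an arrangement of `N` hyperplanes in `ℝⁿ` has at most
`∑_{k=0}^n C(N,k)` (full-dimensional) regions. -/
theorem region_count_bound (n N : ℕ) (ℓ : Fin N → ((Fin n → ℝ) →ᵃ[ℝ] ℝ)) :
    {s : Fin N → Bool | (arrRegion ℓ s).Nonempty}.ncard
      ≤ ∑ k ∈ Finset.range (n + 1), N.choose k := by
  induction N generalizing n with
  | zero =>
    calc _ ≤ 1 := ncard_le_one_of_subsingleton _
      _ = ∑ k ∈ Finset.range (n + 1), (0 : ℕ).choose k := by simp [Finset.sum_range_succ']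
  | succ N ih =>
    cases n with
    | zero => exact (ncard_regionPatterns_le_one ℓ).trans (by simp)
    | succ n =>
      obtain ⟨m, hm⟩ := exists_ncard_splitPatterns_le ℓ
      calc (regionPatterns ℓ).ncard
          ≤ (regionPatterns fun i => ℓ i.castSucc).ncard + (splitPatterns ℓ).ncard :=
            ncard_regionPatterns_le_add ℓ
        _ ≤ ∑ k ∈ Finset.range (n + 2), N.choose k + ∑ k ∈ Finset.range (n + 1), N.choose k :=
            add_le_add (ih _ _) (hm.trans (ih _ m))
        _ = ∑ k ∈ Finset.range (n + 2), (N + 1).choose k := (sum_range_choose_succ N n).symm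
end

section
/- With the region adjacency poset based at B = ⋂_{ℓ∈L} H^{+1}_ℓ (assumed nonempty), the function ρ(R) = |S(R)| = |{ℓ ∈ L : s_R(ℓ) = -1}| is a rank function: B is the unique minimum with ρ(B)=0, and for every region R there is a chain B = R₁ < R₂ < ... < R_K = R totally ordered by ≤ with ρ(R_{k+1}) = ρ(R_k) + 1. -/
/-- The rank `ρ(R) = |S(R)| = |{ℓ : s_R(ℓ) = -1}|` of a region with sign pattern `s`. -/
def regionRank {N : ℕ} (s : Fin N → Bool) : ℕ :=
  (Finset.univ.filter fun i => s i = false).card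

open MeasureTheory

lemma affine_zero_set_null {n : ℕ} (g : (Fin n → ℝ) →ᵃ[ℝ] ℝ) (hg : ∃ y, g y ≠ 0) :
    volume {y : Fin n → ℝ | g y = 0} = 0 := by
  obtain ⟨y, hy⟩ := hg
  have hset : {y : Fin n → ℝ | g y = 0} =
      (AffineSubspace.comap g (AffineSubspace.mk' (0:ℝ) ⊥) : Set (Fin n → ℝ)) := by
    ext z
    simp [AffineSubspace.mem_comap, AffineSubspace.mem_mk', Set.mem_setOf_eq]
  rw [hset]
  refine Measure.addHaar_affineSubspace _ _ (fun htop => hy ?_)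
  have : y ∈ AffineSubspace.comap g (AffineSubspace.mk' (0:ℝ) ⊥) := htop ▸ AffineSubspace.mem_top ℝ _ y
  simpa [AffineSubspace.mem_comap, AffineSubspace.mem_mk'] using this

lemma exists_generic {n : ℕ} {U : Set (Fin n → ℝ)} (hU : IsOpen U) (hne : U.Nonempty)
    {ι : Type} [Fintype ι] (g : ι → ((Fin n → ℝ) →ᵃ[ℝ] ℝ)) (hg : ∀ p, ∃ y, g p y ≠ 0) :
    ∃ b ∈ U, ∀ p, g p b ≠ 0 := by
  by_contra h
  push_neg at h
  have hsub : U ⊆ ⋃ p, {y : Fin n → ℝ | g p y = 0} := fun b hb => by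
    obtain ⟨p, hp⟩ := h b hb; exact Set.mem_iUnion.2 ⟨p, hp⟩
  have h0 : volume (⋃ p, {y : Fin n → ℝ | g p y = 0}) = 0 :=
    measure_iUnion_null fun p => affine_zero_set_null _ (hg p)
  exact absurd (measure_mono_null hsub h0) (hU.measure_pos volume hne).ne'

lemma arrRegion_isOpen {n N : ℕ} (ℓ : Fin N → ((Fin n → ℝ) →ᵃ[ℝ] ℝ)) (s : Fin N → Bool) :
    IsOpen (arrRegion ℓ s) := by
  refine isOpen_iInter_of_finite fun i => ?_
  have hc := (ℓ i).continuous_of_finiteDimensional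
  unfold openHalfspace
  cases s i <;> simp only [if_true, if_false, Bool.false_eq_true]
  · exact isOpen_lt hc continuous_const
  · exact isOpen_lt continuous_const hc

-- sign helper: for a>0, c<0, f(t)=a+t(c-a) has root r=a/(a-c)∈(0,1), pos before, neg after
lemma sign_lemma {a c t : ℝ} (ha : 0 < a) (hc : c < 0) :
    (t < a / (a - c) → 0 < a + t * (c - a)) ∧ (a / (a - c) < t → a + t * (c - a) < 0) := by
  have hd : 0 < a - c := by linarith
  constructor <;> intro ht
  · have := (lt_div_iff₀ hd).1 ht
    nlinarith
  · have := (div_lt_iff₀ hd).1 ht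
    nlinarith

lemma key_step {n N : ℕ} (ℓ : Fin N → ((Fin n → ℝ) →ᵃ[ℝ] ℝ))
    (hdistinct : ∀ i j : Fin N, i ≠ j →
      ({x | ℓ i x = 0} : Set (Fin n → ℝ)) ≠ {x | ℓ j x = 0})
    (hB : (arrRegion ℓ (fun _ => true)).Nonempty)
    (s : Fin N → Bool) (hs : (arrRegion ℓ s).Nonempty) (i₁ : Fin N) (hi₁ : s i₁ = false) :
    ∃ i₀ : Fin N, s i₀ = false ∧ (arrRegion ℓ (Function.update s i₀ true)).Nonempty := by
  obtain ⟨x, hx⟩ := hs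
  have hxmem : ∀ i, x ∈ openHalfspace (ℓ i) (s i) := fun i => Set.mem_iInter.1 hx i
  have hxneg : ∀ i, s i = false → ℓ i x < 0 := by
    intro i hi
    have := hxmem i
    rw [hi] at this
    simpa [openHalfspace] using this
  have hxpos : ∀ i, s i = true → 0 < ℓ i x := by
    intro i hi
    have := hxmem i
    rw [hi] at this
    simpa [openHalfspace] using this
  -- generic b in B
  set ι := {p : Fin N × Fin N // s p.1 = false ∧ s p.2 = false ∧ p.1 ≠ p.2} with hι
  let g : ι → ((Fin n → ℝ) →ᵃ[ℝ] ℝ) := fun p =>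
    (ℓ p.1.2 x) • ℓ p.1.1 - (ℓ p.1.1 x) • ℓ p.1.2
  have hg : ∀ p : ι, ∃ y, g p y ≠ 0 := by
    rintro ⟨⟨i, j⟩, hi, hj, hij⟩
    by_contra h
    push_neg at h
    have hzero : ∀ y, ℓ j x * ℓ i y = ℓ i x * ℓ j y := by
      intro y
      have := h y
      simpa [g, AffineMap.coe_sub, AffineMap.coe_smul, Pi.sub_apply, Pi.smul_apply,
        smul_eq_mul, sub_eq_zero] using this
    refine hdistinct i j hij ?_
    ext z
    simp only [Set.mem_setOf_eq]
    constructor <;> intro hz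
    · have := hzero z
      rw [hz, mul_zero] at this
      exact (mul_eq_zero.1 this.symm).resolve_left (hxneg i hi).ne
    · have := hzero z
      rw [hz, mul_zero] at this
      exact (mul_eq_zero.1 this).resolve_left (hxneg j hj).ne
  obtain ⟨b, hbB, hbg⟩ := exists_generic (arrRegion_isOpen ℓ (fun _ => true)) hB g hg
  have hbpos : ∀ i, 0 < ℓ i b := by
    intro i
    have := Set.mem_iInter.1 hbB i
    simpa [openHalfspace] using this
  -- t values
  set t : Fin N → ℝ := fun i => ℓ i b / (ℓ i b - ℓ i x) with ht
  have htne : ∀ i j, s i = false → s j = false → i ≠ j → t i ≠ t j := by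
    intro i j hi hj hij heq
    apply hbg ⟨⟨i, j⟩, hi, hj, hij⟩
    have hdi : (0:ℝ) < ℓ i b - ℓ i x := by have := hbpos i; have := hxneg i hi; linarith
    have hdj : (0:ℝ) < ℓ j b - ℓ j x := by have := hbpos j; have := hxneg j hj; linarith
    have : ℓ i b * (ℓ j b - ℓ j x) = ℓ j b * (ℓ i b - ℓ i x) := by
      rw [ht] at heq
      field_simp at heq
      linarith [heq]
    have hcross : ℓ j x * ℓ i b - ℓ i x * ℓ j b = 0 := by ring_nf; ring_nf at this; linarith
    simpa [g, AffineMap.coe_sub, AffineMap.coe_smul, Pi.sub_apply, Pi.smul_apply,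
      smul_eq_mul, sub_eq_zero] using hcross
  classical
  -- the false set
  set F : Finset (Fin N) := Finset.univ.filter (fun i => s i = false) with hF
  have hFne : F.Nonempty := ⟨i₁, by simp [hF, hi₁]⟩
  obtain ⟨i₀, hi₀F, hi₀max⟩ := F.exists_max_image t hFne
  have hi₀ : s i₀ = false := by simpa [hF] using hi₀F
  have ht01 : ∀ i, s i = false → 0 < t i ∧ t i < 1 := by
    intro i hi
    have hb := hbpos i
    have hx := hxneg i hi
    have hd : (0:ℝ) < ℓ i b - ℓ i x := by linarith
    constructor
    · exact div_pos hb hd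
    · rw [div_lt_one hd]; linarith
  -- strict max
  have hstrict : ∀ j ∈ F.erase i₀, t j < t i₀ := by
    intro j hj
    obtain ⟨hjne, hjF⟩ := Finset.mem_erase.1 hj
    have hjf : s j = false := by simpa [hF] using hjF
    exact lt_of_le_of_ne (hi₀max j hjF) (htne j i₀ hjf hi₀ hjne)
  -- choose t'
  set S : Finset ℝ := insert (0:ℝ) ((F.erase i₀).image t) with hS
  have hSne : S.Nonempty := ⟨0, by simp [hS]⟩
  set M : ℝ := S.max' hSne with hM
  have hMlt : M < t i₀ := by
    rw [hM]
    refine (Finset.max'_lt_iff S hSne).2 fun y hy => ?_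
    rw [hS] at hy
    rcases Finset.mem_insert.1 hy with h0 | him
    · rw [h0]; exact (ht01 i₀ hi₀).1
    · obtain ⟨j, hj, hje⟩ := Finset.mem_image.1 him
      rw [← hje]; exact hstrict j hj
  set t' : ℝ := (M + t i₀) / 2 with ht'
  have hMt' : M < t' := by rw [ht']; linarith
  have ht'lt : t' < t i₀ := by rw [ht']; linarith
  have ht'pos : 0 < t' := by
    have h0 : (0:ℝ) ≤ M := by
      rw [hM]; exact S.le_max' 0 (by simp [hS])
    linarith
  have ht'lt1 : t' < 1 := lt_trans ht'lt (ht01 i₀ hi₀).2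
  have ht'gt : ∀ j ∈ F.erase i₀, t j < t' := by
    intro j hj
    have hle : t j ≤ M := by
      rw [hM]
      exact S.le_max' (t j) (by rw [hS]; exact Finset.mem_insert_of_mem (Finset.mem_image_of_mem t hj))
    linarith
  -- witness point
  refine ⟨i₀, hi₀, ⟨AffineMap.lineMap b x t', ?_⟩⟩
  refine Set.mem_iInter.2 fun i => ?_
  have happ : ℓ i (AffineMap.lineMap b x t') = ℓ i b + t' * (ℓ i x - ℓ i b) := by
    rw [AffineMap.apply_lineMap]
    simp [AffineMap.lineMap_apply_module]
    ring
  by_cases hii : i = i₀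
  · subst hii
    have := (sign_lemma (hbpos i) (hxneg i hi₀)).1 ht'lt
    simp only [Function.update_self, openHalfspace, if_true]
    rw [Set.mem_setOf_eq, happ]
    linarith [this]
  · rw [Function.update_of_ne hii]
    cases hsi : s i with
    | true =>
      have hpos : 0 < ℓ i b + t' * (ℓ i x - ℓ i b) := by
        have h1 := hbpos i
        have h2 := hxpos i hsi
        nlinarith
      simp only [openHalfspace, if_true]
      rw [Set.mem_setOf_eq, happ]; exact hpos
    | false =>
      have hjF : i ∈ F.erase i₀ := Finset.mem_erase.2 ⟨hii, by simp [hF, hsi]⟩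
      have := (sign_lemma (hbpos i) (hxneg i hsi)).2 (ht'gt i hjF)
      simp only [openHalfspace, Bool.false_eq_true, if_false]
      rw [Set.mem_setOf_eq, happ]
      linarith [this]

lemma rank_all_true {N : ℕ} : regionRank (fun _ : Fin N => true) = 0 := by
  simp [regionRank]

lemma rank_zero_eq {N : ℕ} (s : Fin N → Bool) (h : regionRank s = 0) :
    s = fun _ => true := by
  funext i
  rw [regionRank, Finset.card_eq_zero, Finset.filter_eq_empty_iff] at h
  cases hsi : s i with
  | false => exact absurd hsi (h (Finset.mem_univ i))
  | true => rfl

lemma rank_update_eq {N : ℕ} (s : Fin N → Bool) (i₀ : Fin N) (h : s i₀ = false) :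
    regionRank s = regionRank (Function.update s i₀ true) + 1 := by
  classical
  unfold regionRank
  have hins : Finset.univ.filter (fun i => s i = false) =
      insert i₀ (Finset.univ.filter (fun i => Function.update s i₀ true i = false)) := by
    ext j
    by_cases hj : j = i₀ <;> simp [Function.update_apply, hj, h]
  rw [hins, Finset.card_insert_of_notMem (by simp)]

lemma chain_lemma {n N : ℕ} (ℓ : Fin N → ((Fin n → ℝ) →ᵃ[ℝ] ℝ))
    (hdistinct : ∀ i j : Fin N, i ≠ j →
      ({x | ℓ i x = 0} : Set (Fin n → ℝ)) ≠ {x | ℓ j x = 0})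
    (hB : (arrRegion ℓ (fun _ => true)).Nonempty) :
    ∀ (m : ℕ) (s : Fin N → Bool), regionRank s = m → (arrRegion ℓ s).Nonempty →
      ∃ (K : ℕ) (c : Fin (K + 1) → (Fin N → Bool)),
        c 0 = (fun _ => true) ∧ c (Fin.last K) = s ∧
        (∀ k : Fin (K + 1), (arrRegion ℓ (c k)).Nonempty) ∧
        (∀ k : Fin K, {i | c k.castSucc i = false} ⊆ {i | c k.succ i = false}) ∧
        (∀ k : Fin K, regionRank (c k.succ) = regionRank (c k.castSucc) + 1) := by
  intro m
  induction m with
  | zero =>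
    intro s hrank hne
    refine ⟨0, fun _ => (fun _ => true), rfl, ?_, fun k => hB, fun k => k.elim0, fun k => k.elim0⟩
    rw [rank_zero_eq s hrank]
  | succ m ih =>
    intro s hrank hne
    have hex : ∃ i, s i = false := by
      by_contra h
      push_neg at h
      have hst : s = fun _ => true := funext fun i => by
        cases hsi : s i with
        | false => exact absurd hsi (h i)
        | true => rfl
      rw [hst, rank_all_true] at hrank
      exact Nat.succ_ne_zero m hrank.symm
    obtain ⟨i₁, hi₁⟩ := hex
    obtain ⟨i₀, hi₀, hne'⟩ := key_step ℓ hdistinct hB s hne i₁ hi₁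
    have hrk : regionRank (Function.update s i₀ true) = m := by
      have := rank_update_eq s i₀ hi₀
      omega
    obtain ⟨K, c, hc0, hclast, hcne, hcsub, hcrank⟩ := ih _ hrk hne'
    refine ⟨K + 1, Fin.snoc c s, ?_, ?_, ?_, ?_, ?_⟩
    · rw [show (0 : Fin (K+1+1)) = Fin.castSucc 0 from rfl, Fin.snoc_castSucc]
      exact hc0
    · rw [Fin.snoc_last]
    · intro k
      refine Fin.lastCases ?_ (fun j => ?_) k
      · rw [Fin.snoc_last]; exact hne
      · rw [Fin.snoc_castSucc]; exact hcne j
    · intro k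
      refine Fin.lastCases ?_ (fun j => ?_) k
      · simp only [Fin.succ_last, Fin.snoc_last, Fin.snoc_castSucc, hclast]
        intro i hi
        simp only [Set.mem_setOf_eq, Function.update_apply] at hi ⊢
        by_cases hii : i = i₀
        · rw [hii] at hi; simp at hi
        · rw [if_neg hii] at hi; exact hi
      · simp only [Fin.succ_castSucc, Fin.snoc_castSucc]
        exact hcsub j
    · intro k
      refine Fin.lastCases ?_ (fun j => ?_) k
      · simp only [Fin.succ_last, Fin.snoc_last, Fin.snoc_castSucc, hclast]
        exact rank_update_eq s i₀ hi₀
      · simp only [Fin.succ_castSucc, Fin.snoc_castSucc]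
        exact hcrank j

/-- `ρ(R) = |S(R)|` ranks the region adjacency poset based at
`B = ⋂ H^{+1}`: `ρ(B) = 0`, `B` is the unique region of rank `0`, and every region `R`
is reached from `B` by a totally ordered chain of regions along which `ρ` increases
by exactly `1` at each step. -/
theorem region_poset_ranked (n N : ℕ)
    (ℓ : Fin N → ((Fin n → ℝ) →ᵃ[ℝ] ℝ))
    (hdistinct : ∀ i j : Fin N, i ≠ j →
      ({x | ℓ i x = 0} : Set (Fin n → ℝ)) ≠ {x | ℓ j x = 0})
    (hB : (arrRegion ℓ (fun _ => true)).Nonempty) :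
    regionRank (fun _ : Fin N => true) = 0 ∧
    (∀ s : Fin N → Bool, (arrRegion ℓ s).Nonempty → regionRank s = 0 →
      s = fun _ => true) ∧
    (∀ s : Fin N → Bool, (arrRegion ℓ s).Nonempty →
      ∃ (K : ℕ) (c : Fin (K + 1) → (Fin N → Bool)),
        c 0 = (fun _ => true) ∧ c (Fin.last K) = s ∧
        (∀ k : Fin (K + 1), (arrRegion ℓ (c k)).Nonempty) ∧
        (∀ k : Fin K, {i | c k.castSucc i = false} ⊆ {i | c k.succ i = false}) ∧
        (∀ k : Fin K, regionRank (c k.succ) = regionRank (c k.castSucc) + 1)) := by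
  refine ⟨rank_all_true, fun s _ h => rank_zero_eq s h, fun s hs =>
    chain_lemma ℓ hdistinct hB (regionRank s) s rfl hs⟩
end

section
/- Let R be a full-dimensional region of a hyperplane arrangement in R^n and let F be an (n-1)-dimensional face of R with unique zero affine function ℓ'. Then ℓ' is irredundant in the H-representation of the closure of R: the closure of R is strictly contained in the closure of ⋂_{ℓ∈L, ℓ≠ℓ'} H^{s(ℓ)}_ℓ. Equivalently, ℓ' appears in every minimal H-representation of cl(R). -/
/-- The set `H^q_ℓ` for `q ∈ {-1, 0, +1}`. -/
def signSet {n : ℕ} (ℓ : (Fin n → ℝ) →ᵃ[ℝ] ℝ) (q : SignType) : Set (Fin n → ℝ) :=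
  match q with
  | .neg  => {x | ℓ x < 0}
  | .zero => {x | ℓ x = 0}
  | .pos  => {x | 0 < ℓ x}

/-- Sign pattern of a region, encoded with `true = +1`, `false = -1`. -/
def boolSign (b : Bool) : SignType := if b then .pos else .neg

lemma mem_signSet_boolSign {n : ℕ} (f : (Fin n → ℝ) →ᵃ[ℝ] ℝ) (b : Bool) (x : Fin n → ℝ) :
    x ∈ signSet f (boolSign b) ↔ (if b then 0 < f x else f x < 0) := by
  cases b <;> exact Iff.rfl

/-- if `F` is an `(n-1)`-dimensional face of the full-dimensional region
`R = ⋂_{ℓ∈L} H^{s(ℓ)}` with unique zero affine function `ℓ i'`, then the constraint `ℓ i'`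
is irredundant in the H-representation of `cl(R)`: the closure of `R` is *strictly*
contained in the closure of `⋂_{ℓ ≠ ℓ i'} H^{s(ℓ)}`.  (Hence `ℓ i'` appears in every
minimal H-representation of `cl(R)`.) -/
theorem face_constraint_irredundant (n N : ℕ)
    (ℓ : Fin N → ((Fin n → ℝ) →ᵃ[ℝ] ℝ))
    (s : Fin N → Bool) (i' : Fin N)
    (hnormal : (ℓ i').linear ≠ 0)
    (hR : (⋂ i, signSet (ℓ i) (boolSign (s i))).Nonempty)
    (sF : Fin N → SignType)
    (hFzero : sF i' = 0)
    (hFagree : ∀ i, i ≠ i' → sF i = boolSign (s i))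
    (hF : (⋂ i, signSet (ℓ i) (sF i)).Nonempty) :
    closure (⋂ i, signSet (ℓ i) (boolSign (s i)))
      ⊂ closure (⋂ i ∈ {j : Fin N | j ≠ i'}, signSet (ℓ i) (boolSign (s i))) := by
  obtain ⟨x, hx⟩ := hF
  rw [Set.mem_iInter] at hx
  obtain ⟨w, hw⟩ : ∃ w, (ℓ i').linear w ≠ 0 := by
    by_contra h
    push_neg at h
    exact hnormal (LinearMap.ext fun w => by simpa using h w)
  set v : Fin n → ℝ := ((ℓ i').linear w)⁻¹ • w with hvdef
  have hv1 : (ℓ i').linear v = 1 := by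
    simp [hvdef, map_smul, inv_mul_cancel₀ hw]
  set φ : ℝ → (Fin n → ℝ) := fun t => x + t • v with hφ
  have hφc : Continuous φ := continuous_const.add (continuous_id.smul continuous_const)
  have hφval : ∀ i t, ℓ i (φ t) = ℓ i x + t * (ℓ i).linear v := by
    intro i t
    have h1 : φ t = (t • v) +ᵥ x := by simp [hφ, add_comm]
    rw [h1, AffineMap.map_vadd, map_smul]
    simp [add_comm, smul_eq_mul]
  have hxi' : ℓ i' x = 0 := by
    have h := hx i'
    rw [hFzero] at h
    exact h
  have hcont : ∀ i, Continuous (ℓ i) := fun i => (ℓ i).continuous_of_finiteDimensional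
  -- an interval around 0 where all other constraints stay strict
  have key : ∃ δ > 0, ∀ t : ℝ, |t| < δ → ∀ i, i ≠ i' →
      φ t ∈ signSet (ℓ i) (boolSign (s i)) := by
    set U : Set ℝ := ⋂ i ∈ {j : Fin N | j ≠ i'}, {t : ℝ | φ t ∈ signSet (ℓ i) (boolSign (s i))}
      with hUdef
    have hopen : IsOpen U := by
      apply Set.Finite.isOpen_biInter (Set.toFinite _)
      intro i _
      have : {t : ℝ | φ t ∈ signSet (ℓ i) (boolSign (s i))}
          = {t : ℝ | if s i then 0 < ℓ i (φ t) else ℓ i (φ t) < 0} := by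
        ext t; exact mem_signSet_boolSign _ _ _
      rw [this]
      cases hs : s i
      · show IsOpen {t : ℝ | ℓ i (φ t) < 0}
        exact isOpen_Iio.preimage ((hcont i).comp hφc)
      · show IsOpen {t : ℝ | 0 < ℓ i (φ t)}
        exact isOpen_Ioi.preimage ((hcont i).comp hφc)
    have h0 : (0:ℝ) ∈ U := by
      rw [hUdef, Set.mem_iInter₂]
      intro i hi
      have h := hx i
      rw [hFagree i hi] at h
      have h0 : φ 0 = x := by rw [hφ]; simp
      show φ 0 ∈ signSet (ℓ i) (boolSign (s i))
      rwa [h0]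
    obtain ⟨δ, hδ, hball⟩ := Metric.isOpen_iff.1 hopen 0 h0
    refine ⟨δ, hδ, fun t ht i hi => ?_⟩
    have : t ∈ U := hball (by simpa [Real.dist_eq] using ht)
    rw [hUdef, Set.mem_iInter₂] at this
    exact this i hi
  obtain ⟨δ, hδ, hgood⟩ := key
  set t₀ : ℝ := if s i' then -(δ/2) else δ/2 with ht₀def
  have ht₀abs : |t₀| < δ := by
    have : |t₀| = δ/2 := by
      rw [ht₀def]; split
      · rw [abs_neg, abs_of_pos (by linarith)]
      · rw [abs_of_pos (by linarith)]
    rw [this]; linarith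
  have hy : φ t₀ ∈ ⋂ i ∈ {j : Fin N | j ≠ i'}, signSet (ℓ i) (boolSign (s i)) := by
    rw [Set.mem_iInter₂]
    exact fun i hi => hgood t₀ ht₀abs i hi
  have hyval : ℓ i' (φ t₀) = t₀ := by
    rw [hφval, hxi', hv1]; ring
  -- closure R lies in the closed halfspace of i'
  have hclosR : closure (⋂ i, signSet (ℓ i) (boolSign (s i))) ⊆
      {z | if s i' then 0 ≤ ℓ i' z else ℓ i' z ≤ 0} := by
    apply closure_minimal
    · intro z hz
      have h := (mem_signSet_boolSign _ _ _).1 (Set.mem_iInter.1 hz i')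
      simp only [Set.mem_setOf_eq]
      cases hs : s i'
      · rw [hs] at h
        exact le_of_lt (show ℓ i' z < 0 from h)
      · rw [hs] at h
        exact le_of_lt (show 0 < ℓ i' z from h)
    · cases hs : s i'
      · show IsClosed {z | ℓ i' z ≤ 0}
        exact isClosed_Iic.preimage (hcont i')
      · show IsClosed {z | 0 ≤ ℓ i' z}
        exact isClosed_Ici.preimage (hcont i')
  have hynot : φ t₀ ∉ closure (⋂ i, signSet (ℓ i) (boolSign (s i))) := by
    intro hmem
    have h := hclosR hmem
    simp only [Set.mem_setOf_eq, hyval] at h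
    cases hs : s i'
    · rw [ht₀def, hs] at h
      norm_num at h
      linarith
    · rw [ht₀def, hs] at h
      norm_num at h
      linarith
  constructor
  · apply closure_mono
    intro z hz
    rw [Set.mem_iInter₂]
    exact fun i _ => Set.mem_iInter.1 hz i
  · intro hsub
    exact hynot (hsub (subset_closure hy))
end
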